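/- Let α > 0 be a constant, C > 0, and 0 < D₁ ≤ D₂. For i = 1, 2, let y_i : [0,∞) → ℝ be continuously differentiable on [0,∞) and twice differentiable on (0,∞), satisfying D_i·(y_i''(r) + (1/r)·y_i'(r)) + α·y_i(r) = 0 for all r > 0, with y_i(0) = C and y_i'(0) = 0. Assume each y_i has at least one positive root, and let R*(D_i) be its first positive root. Then R*(D₁) ≤ R*(D₂). -/
import Mathlib


open Set

/-- Basic properties of the first positive root of a continuous function starting positive. -/
lemma firstRoot_props (y : ℝ → ℝ) (C : ℝ) (hC : 0 < C) (hy0 : y 0 = C)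
    (hcont : ContinuousOn y (Ici 0)) (hne : {r : ℝ | 0 < r ∧ y r = 0}.Nonempty)
    (R : ℝ) (hR : R = sInf {r : ℝ | 0 < r ∧ y r = 0}) :
    0 < R ∧ y R = 0 ∧ ∀ r, 0 ≤ r → r < R → 0 < y r := by
  set S : Set ℝ := {r : ℝ | 0 < r ∧ y r = 0} with hS
  have hbdd : BddBelow S := ⟨0, fun x hx => hx.1.le⟩
  -- y R = 0 and 0 ≤ R
  have hclosed : IsClosed (Ici (0:ℝ) ∩ y ⁻¹' {0}) :=
    hcont.preimage_isClosed_of_isClosed isClosed_Ici isClosed_singleton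
  have hsub : S ⊆ Ici (0:ℝ) ∩ y ⁻¹' {0} := fun x hx => ⟨hx.1.le, hx.2⟩
  have hRmem : R ∈ Ici (0:ℝ) ∩ y ⁻¹' {0} := by
    have := csInf_mem_closure hne hbdd
    rw [← hR] at this
    exact closure_minimal hsub hclosed this
  have hyR : y R = 0 := hRmem.2
  have hR0 : (0:ℝ) ≤ R := hRmem.1
  -- positivity around 0 gives a positive lower bound
  have hcw : ContinuousWithinAt y (Ici 0) 0 := hcont 0 (self_mem_Ici)
  have hev : ∀ᶠ r in nhdsWithin 0 (Ici 0), 0 < y r := by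
    apply hcw.eventually
    rw [hy0]
    exact eventually_gt_nhds hC
  obtain ⟨u, huopen, hu0, husub⟩ := mem_nhdsWithin.mp hev
  obtain ⟨ε, hε, hball⟩ := Metric.isOpen_iff.mp huopen 0 hu0
  have hlb : ∀ s ∈ S, ε ≤ s := by
    intro s hs
    by_contra hlt
    push_neg at hlt
    have hsu : s ∈ u := by
      apply hball
      rw [Metric.mem_ball, Real.dist_eq, sub_zero, abs_of_pos hs.1]
      exact hlt
    have : 0 < y s := husub ⟨hsu, hs.1.le⟩
    rw [hs.2] at this
    exact lt_irrefl 0 this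
  have hRpos : 0 < R := by
    have : ε ≤ R := hR ▸ le_csInf hne hlb
    linarith
  refine ⟨hRpos, hyR, ?_⟩
  intro r hr0 hrR
  by_contra hle
  push_neg at hle
  -- intermediate value gives a root in (0, r]
  have hmono : ContinuousOn y (Icc 0 r) := hcont.mono (Icc_subset_Ici_self)
  have h0 : (0:ℝ) ∈ Icc (y r) (y 0) := by
    constructor
    · exact hle
    · rw [hy0]; exact hC.le
  obtain ⟨s, hsmem, hys⟩ := intermediate_value_Icc' hr0 hmono h0
  have hspos : 0 < s := by
    rcases hsmem.1.lt_or_eq with h | h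
    · exact h
    · exfalso; rw [← h, hy0] at hys; linarith
  have hsS : s ∈ S := ⟨hspos, hys⟩
  have : R ≤ s := hR ▸ csInf_le hbdd hsS
  linarith [hsmem.2]

/-- At the first positive root, the derivative is strictly negative
(for solutions of the radially symmetric equation). -/
lemma deriv_neg_at_root (D α : ℝ) (hD : 0 < D) (hα : 0 < α) (y y' y'' : ℝ → ℝ)
    (hy'c : ContinuousOn y' (Ici 0))
    (hydd : ∀ r > (0:ℝ), HasDerivAt y' (y'' r) r)
    (hode : ∀ r > (0:ℝ), D * (y'' r + (1/r) * y' r) + α * y r = 0)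
    (hy'0 : y' 0 = 0)
    (R : ℝ) (hRpos : 0 < R) (hpos : ∀ r, 0 < r → r < R → 0 < y r) :
    y' R < 0 := by
  set w : ℝ → ℝ := fun r => r * y' r with hw
  have hwc : ContinuousOn w (Icc 0 R) :=
    (continuousOn_id.mul (hy'c.mono Icc_subset_Ici_self))
  have hint : interior (Icc (0:ℝ) R) = Ioo 0 R := interior_Icc
  have hwderiv : ∀ x ∈ interior (Icc (0:ℝ) R), deriv w x < 0 := by
    intro x hx
    rw [hint] at hx
    obtain ⟨hx0, hxR⟩ := hx
    have hdw : HasDerivAt w (1 * y' x + x * y'' x) x :=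
      (hasDerivAt_id x).mul (hydd x hx0)
    rw [hdw.deriv]
    have h1 := hode x hx0
    have hx0' : x ≠ 0 := ne_of_gt hx0
    have e1 : D * (x * y'' x + y' x) + α * x * y x = 0 := by
      field_simp at h1
      linarith
    have hyx : 0 < y x := hpos x hx0 hxR
    have hDe : D * (1 * y' x + x * y'' x) = -(α * x * y x) := by linear_combination e1
    have hrhs : -(α * x * y x) < 0 := by nlinarith [mul_pos (mul_pos hα hx0) hyx]
    by_contra hc
    push_neg at hc
    nlinarith [mul_nonneg hD.le hc]
  have hanti : StrictAntiOn w (Icc 0 R) :=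
    strictAntiOn_of_deriv_neg (convex_Icc 0 R) hwc hwderiv
  have h0mem : (0:ℝ) ∈ Icc (0:ℝ) R := ⟨le_refl 0, hRpos.le⟩
  have hRmem : R ∈ Icc (0:ℝ) R := ⟨hRpos.le, le_refl R⟩
  have := hanti h0mem hRmem hRpos
  have hw0 : w 0 = 0 := by simp [hw]
  have hwR : R * y' R < 0 := by rw [hw0] at this; exact this
  nlinarith

/-- For constant growth rate `α`, the spreading-vanishing threshold `R*(D)` is
monotone nondecreasing in the diffusion coefficient: `D₁ ≤ D₂` implies `R*(D₁) ≤ R*(D₂)`. -/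
theorem threshold_monotone_in_diffusion
    (α C : ℝ) (hα : 0 < α) (hC : 0 < C)
    (D₁ D₂ : ℝ) (hD₁ : 0 < D₁) (hD₁₂ : D₁ ≤ D₂)
    (y1 y1' y1'' y2 y2' y2'' : ℝ → ℝ)
    (hy1d : ∀ r ∈ Ici (0:ℝ), HasDerivWithinAt y1 (y1' r) (Ici 0) r)
    (hy1'c : ContinuousOn y1' (Ici 0))
    (hy1dd : ∀ r > (0:ℝ), HasDerivAt y1' (y1'' r) r)
    (hy2d : ∀ r ∈ Ici (0:ℝ), HasDerivWithinAt y2 (y2' r) (Ici 0) r)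
    (hy2'c : ContinuousOn y2' (Ici 0))
    (hy2dd : ∀ r > (0:ℝ), HasDerivAt y2' (y2'' r) r)
    (hode1 : ∀ r > (0:ℝ), D₁ * (y1'' r + (1/r) * y1' r) + α * y1 r = 0)
    (hode2 : ∀ r > (0:ℝ), D₂ * (y2'' r + (1/r) * y2' r) + α * y2 r = 0)
    (hy1init : y1 0 = C) (hy1'init : y1' 0 = 0)
    (hy2init : y2 0 = C) (hy2'init : y2' 0 = 0)
    (hroot1 : {r : ℝ | 0 < r ∧ y1 r = 0}.Nonempty)
    (hroot2 : {r : ℝ | 0 < r ∧ y2 r = 0}.Nonempty)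
    (R1 R2 : ℝ)
    (hR1 : R1 = sInf {r : ℝ | 0 < r ∧ y1 r = 0})
    (hR2 : R2 = sInf {r : ℝ | 0 < r ∧ y2 r = 0}) :
    R1 ≤ R2 := by
  have hD₂ : 0 < D₂ := lt_of_lt_of_le hD₁ hD₁₂
  have hy1c : ContinuousOn y1 (Ici 0) := fun r hr => (hy1d r hr).continuousWithinAt
  have hy2c : ContinuousOn y2 (Ici 0) := fun r hr => (hy2d r hr).continuousWithinAt
  obtain ⟨hR1pos, hy1R1, hy1pos⟩ := firstRoot_props y1 C hC hy1init hy1c hroot1 R1 hR1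
  obtain ⟨hR2pos, hy2R2, hy2pos⟩ := firstRoot_props y2 C hC hy2init hy2c hroot2 R2 hR2
  by_contra hcon
  push_neg at hcon  -- R2 < R1
  -- derivative of y2 at R2 is negative
  have hy2'neg : y2' R2 < 0 :=
    deriv_neg_at_root D₂ α hD₂ hα y2 y2' y2'' hy2'c hy2dd hode2 hy2'init R2 hR2pos
      (fun r h1 h2 => hy2pos r h1.le h2)
  -- y1 is positive on [0, R2]
  have hy1R2 : 0 < y1 R2 := hy1pos R2 hR2pos.le hcon
  -- Wronskian argument
  set W : ℝ → ℝ := fun r => r * (y1' r * y2 r - y1 r * y2' r) with hW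
  have hWc : ContinuousOn W (Icc 0 R2) := by
    apply ContinuousOn.mul continuousOn_id
    apply ContinuousOn.sub
    · exact ((hy1'c.mono Icc_subset_Ici_self).mul (hy2c.mono Icc_subset_Ici_self))
    · exact ((hy1c.mono Icc_subset_Ici_self).mul (hy2'c.mono Icc_subset_Ici_self))
  have hWd : ∀ x ∈ interior (Icc (0:ℝ) R2),
      HasDerivAt W (1 * (y1' x * y2 x - y1 x * y2' x)
        + x * ((y1'' x * y2 x + y1' x * y2' x) - (y1' x * y2' x + y1 x * y2'' x))) x := by
    intro x hx
    rw [interior_Icc] at hx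
    obtain ⟨hx0, hxR⟩ := hx
    have h1 : HasDerivAt y1 (y1' x) x :=
      (hy1d x hx0.le).hasDerivAt (Ici_mem_nhds hx0)
    have h2 : HasDerivAt y2 (y2' x) x :=
      (hy2d x hx0.le).hasDerivAt (Ici_mem_nhds hx0)
    exact (hasDerivAt_id x).mul
      (((hy1dd x hx0).mul h2).sub (h1.mul (hy2dd x hx0)))
  have hWanti : AntitoneOn W (Icc 0 R2) := by
    apply antitoneOn_of_deriv_nonpos (convex_Icc 0 R2) hWc
    · intro x hx
      exact (hWd x hx).differentiableAt.differentiableWithinAt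
    · intro x hx
      rw [(hWd x hx).deriv]
      rw [interior_Icc] at hx
      obtain ⟨hx0, hxR⟩ := hx
      have hx0' : x ≠ 0 := ne_of_gt hx0
      have h1 := hode1 x hx0
      have h2 := hode2 x hx0
      have e1 : D₁ * (x * y1'' x + y1' x) + α * x * y1 x = 0 := by
        field_simp at h1; linarith
      have e2 : D₂ * (x * y2'' x + y2' x) + α * x * y2 x = 0 := by
        field_simp at h2; linarith
      have hy1x : 0 < y1 x := hy1pos x hx0.le (lt_trans hxR hcon)
      have hy2x : 0 < y2 x := hy2pos x hx0.le hxR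
      -- D₁ * D₂ * W' x = α * (D₁ - D₂) * x * y1 x * y2 x ≤ 0
      have key : D₁ * D₂ * (1 * (y1' x * y2 x - y1 x * y2' x)
          + x * ((y1'' x * y2 x + y1' x * y2' x) - (y1' x * y2' x + y1 x * y2'' x)))
          = α * (D₁ - D₂) * (x * y1 x * y2 x) := by
        linear_combination D₂ * y2 x * e1 - D₁ * y1 x * e2
      have h3 : α * (D₁ - D₂) ≤ 0 := by nlinarith
      have hpos : 0 < x * y1 x * y2 x := mul_pos (mul_pos hx0 hy1x) hy2x
      have h4 : α * (D₁ - D₂) * (x * y1 x * y2 x) ≤ 0 :=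
        mul_nonpos_of_nonpos_of_nonneg h3 hpos.le
      by_contra hc
      push_neg at hc
      nlinarith [mul_pos (mul_pos hD₁ hD₂) hc]
  have h0mem : (0:ℝ) ∈ Icc (0:ℝ) R2 := ⟨le_refl 0, hR2pos.le⟩
  have hRmem : R2 ∈ Icc (0:ℝ) R2 := ⟨hR2pos.le, le_refl R2⟩
  have hle := hWanti h0mem hRmem hR2pos.le
  have hW0 : W 0 = 0 := by simp [hW]
  have hWR2 : W R2 = - (R2 * y1 R2 * y2' R2) := by
    simp only [hW]
    rw [hy2R2]
    ring
  rw [hW0, hWR2] at hle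
  nlinarith [mul_neg_of_pos_of_neg (mul_pos hR2pos hy1R2) hy2'neg]
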